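/- The Space KAM evaluates the consuming scrolling algorithm in logarithmic space: for every binary string s ∈ {0,1}*, the Space KAM run from the initial state (toy ⟨s⟩, ε, ε) is complete, ends in the state (I, ε, ε), and its space is Θ(log |s|): there are constants k1, k2 > 0 independent of s such that the space is at most k2·(log|s| + 1) for all s, and at least k1·log|s| for all s with |s| ≥ 2. -/

import Mathlib

set_option autoImplicit false

/-! λ-terms with variable names in ℕ. -/
inductive Term : Type
  | var : ℕ → Term
  | lam : ℕ → Term → Term
  | app : Term → Term → Term
deriving DecidableEq

namespace Term

/-- Free variables. -/
def fv : Term → Finset ℕ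
  | var x => {x}
  | lam x t => fv t \ {x}
  | app t u => fv t ∪ fv u

/-- A term is closed if it has no free variables. -/
def closed (t : Term) : Prop := t.fv = ∅

/-- Substitution of `u` for the free occurrences of `x`; it is capture-avoiding
whenever the substituted term `u` is closed, which is the only case arising in
Closed Call-by-Name. -/
def subst (x : ℕ) (u : Term) : Term → Term
  | var y => if y = x then u else var y
  | lam y t => if y = x then lam y t else lam y (subst x u t)
  | app t r => app (subst x u t) (subst x u r)

/-- In-order (left-to-right) enumeration of the constructors (as subterm occurrences). -/
def inorder : Term → List Term
  | var x => [var x]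
  | lam x t => lam x t :: inorder t
  | app t u => inorder t ++ app t u :: inorder u

/-- Membership in the deterministic λ-calculus `Λdet`: the right subterm of every
application is a variable or an abstraction. -/
def IsDet : Term → Prop
  | var _ => True
  | lam _ t => IsDet t
  | app t u => IsDet t ∧ IsDet u ∧ ((∃ x, u = var x) ∨ ∃ x r, u = lam x r)

end Term

/-- Weak head reduction: `(λx.t) u r1 … rh →wh t{x:=u} r1 … rh`. -/
inductive Whr : Term → Term → Prop
  | beta (x : ℕ) (t u : Term) : Whr (Term.app (Term.lam x t) u) (Term.subst x u t)
  | appL {t t' : Term} (u : Term) : Whr t t' → Whr (Term.app t u) (Term.app t' u)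

def WhNormal (t : Term) : Prop := ∀ u, ¬ Whr t u

/-- `NSteps R n a b`: exactly `n` `R`-steps from `a` to `b`. -/
inductive NSteps {α : Type _} (R : α → α → Prop) : ℕ → α → α → Prop
  | refl (a : α) : NSteps R 0 a a
  | head {a b c : α} {n : ℕ} : R a b → NSteps R n b c → NSteps R (n + 1) a c

/-! Closures and (local) environments. -/
mutual
  inductive Clo : Type
    | mk : Term → Env → Clo
  inductive Env : Type
    | nil : Env
    | cons : ℕ → Clo → Env → Env
end

def Env.lookup : Env → ℕ → Option Clo
  | .nil, _ => none
  | .cons y c e, x => if y = x then some c else Env.lookup e x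

def Env.dom : Env → Finset ℕ
  | .nil => ∅
  | .cons x _ e => insert x (Env.dom e)

/-- Restriction `e|s` of an environment to a set of variables. -/
def Env.restrict : Env → Finset ℕ → Env
  | .nil, _ => .nil
  | .cons x c e, s => if x ∈ s then .cons x c (Env.restrict e s) else Env.restrict e s

mutual
  /-- Decoding of a closure into a λ-term. -/
  def Clo.decode : Clo → Term
    | .mk t e => Env.decode t e
  /-- Decoding: `(t, ε)↓ = t`, `(t, [x←c]·e)↓ = (t{x:=c↓}, e)↓`. -/
  def Env.decode : Term → Env → Term
    | t, .nil => t
    | t, .cons x c e => Env.decode (Term.subst x (Clo.decode c) t) e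
end

mutual
  /-- Hereditary number of closures in a closure (without sharing). -/
  def Clo.count : Clo → ℕ
    | .mk _ e => 1 + Env.count e
  def Env.count : Env → ℕ
    | .nil => 0
    | .cons _ c e => Clo.count c + Env.count e
end

mutual
  /-- A closure `(t,e)` is closed: `fv t ⊆ dom e` and hereditarily so. -/
  def Clo.Closed : Clo → Prop
    | .mk t e => t.fv ⊆ e.dom ∧ Env.ClosedE e
  def Env.ClosedE : Env → Prop
    | .nil => True
    | .cons _ c e => Clo.Closed c ∧ Env.ClosedE e
end

mutual
  /-- Environment domain invariant: `dom e = fv t`, hereditarily. -/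
  def Clo.DomInv : Clo → Prop
    | .mk t e => e.dom = t.fv ∧ Env.DomInvE e
  def Env.DomInvE : Env → Prop
    | .nil => True
    | .cons _ c e => Clo.DomInv c ∧ Env.DomInvE e
end

/-- Size of the left address of (the first occurrence of) `u` in the code `t0`:
the binary length of its index in the in-order enumeration of the constructors of `t0`. -/
def addrSize (t0 u : Term) : ℕ := Nat.size (t0.inorder.idxOf u)

mutual
  /-- Size of a closure, relative to the initial code `t0`. -/
  def Clo.size : Term → Clo → ℕ
    | t0, .mk u e => addrSize t0 u + Env.sizeE t0 e
  /-- Size of an environment, relative to the initial code `t0`. -/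
  def Env.sizeE : Term → Env → ℕ
    | _, .nil => 0
    | t0, .cons x c e => addrSize t0 (Term.var x) + Clo.size t0 c + Env.sizeE t0 e
end

def stackSize (t0 : Term) (S : List Clo) : ℕ := (S.map (Clo.size t0)).sum

/-- States of the (Naive/Space) KAM. -/
structure State where
  tm : Term
  env : Env
  stk : List Clo

/-- Size of a state, relative to the initial code `t0`. -/
def State.size (t0 : Term) (s : State) : ℕ :=
  addrSize t0 s.tm + Env.sizeE t0 s.env + stackSize t0 s.stk

/-- Closure count of a state: total number of closures occurring in it,
hereditarily and without sharing (the active term/environment pair is a closure). -/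
def State.count (s : State) : ℕ :=
  1 + Env.count s.env + (s.stk.map Clo.count).sum

def State.decode (s : State) : Term :=
  s.stk.foldl (fun a c => Term.app a c.decode) (Env.decode s.tm s.env)

def initState (t : Term) : State := ⟨t, .nil, []⟩

/-! The Naive KAM. -/
inductive NK : State → State → Prop
  | sea (t u : Term) (e : Env) (S : List Clo) :
      NK ⟨.app t u, e, S⟩ ⟨t, e, .mk u e :: S⟩
  | beta (x : ℕ) (t : Term) (e : Env) (c : Clo) (S : List Clo) :
      NK ⟨.lam x t, e, c :: S⟩ ⟨t, .cons x c e, S⟩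
  | sub {x : ℕ} {e : Env} {u : Term} {e' : Env} (S : List Clo) :
      Env.lookup e x = some (.mk u e') → NK ⟨.var x, e, S⟩ ⟨u, e', S⟩

def NKFinal (s : State) : Prop := ∀ s', ¬ NK s s'

/-- Naive KAM runs counting the number of β-transitions. -/
inductive NKRun : ℕ → State → State → Prop
  | refl (s : State) : NKRun 0 s s
  | sea {t u : Term} {e : Env} {S : List Clo} {s' : State} {n : ℕ} :
      NKRun n ⟨t, e, .mk u e :: S⟩ s' → NKRun n ⟨.app t u, e, S⟩ s'
  | beta {x : ℕ} {t : Term} {e : Env} {c : Clo} {S : List Clo} {s' : State} {n : ℕ} :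
      NKRun n ⟨t, .cons x c e, S⟩ s' → NKRun (n + 1) ⟨.lam x t, e, c :: S⟩ s'
  | sub {x : ℕ} {e : Env} {u : Term} {e' : Env} {S : List Clo} {s' : State} {n : ℕ} :
      Env.lookup e x = some (.mk u e') → NKRun n ⟨u, e', S⟩ s' → NKRun n ⟨.var x, e, S⟩ s'

/-! The Space KAM. -/
inductive SK : State → State → Prop
  | seav {t : Term} {x : ℕ} {e : Env} {c : Clo} (S : List Clo) :
      Env.lookup e x = some c →
      SK ⟨.app t (.var x), e, S⟩ ⟨t, e.restrict t.fv, c :: S⟩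
  | seanv {t u : Term} {e : Env} (S : List Clo) :
      (∀ x, u ≠ .var x) →
      SK ⟨.app t u, e, S⟩ ⟨t, e.restrict t.fv, .mk u (e.restrict u.fv) :: S⟩
  | betaw {x : ℕ} {t : Term} {e : Env} (c : Clo) (S : List Clo) :
      x ∉ t.fv → SK ⟨.lam x t, e, c :: S⟩ ⟨t, e, S⟩
  | betanw {x : ℕ} {t : Term} {e : Env} (c : Clo) (S : List Clo) :
      x ∈ t.fv → SK ⟨.lam x t, e, c :: S⟩ ⟨t, .cons x c e, S⟩
  | sub {x : ℕ} {e : Env} {u : Term} {e' : Env} (S : List Clo) :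
      Env.lookup e x = some (.mk u e') → SK ⟨.var x, e, S⟩ ⟨u, e', S⟩

def SKFinal (s : State) : Prop := ∀ s', ¬ SK s s'

/-- Space KAM runs counting the number of β-transitions (`→βw` and `→β¬w`). -/
inductive SKRun : ℕ → State → State → Prop
  | refl (s : State) : SKRun 0 s s
  | seav {t : Term} {x : ℕ} {e : Env} {c : Clo} {S : List Clo} {s' : State} {n : ℕ} :
      Env.lookup e x = some c →
      SKRun n ⟨t, e.restrict t.fv, c :: S⟩ s' → SKRun n ⟨.app t (.var x), e, S⟩ s'
  | seanv {t u : Term} {e : Env} {S : List Clo} {s' : State} {n : ℕ} :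
      (∀ x, u ≠ .var x) →
      SKRun n ⟨t, e.restrict t.fv, .mk u (e.restrict u.fv) :: S⟩ s' →
      SKRun n ⟨.app t u, e, S⟩ s'
  | betaw {x : ℕ} {t : Term} {e : Env} {c : Clo} {S : List Clo} {s' : State} {n : ℕ} :
      x ∉ t.fv → SKRun n ⟨t, e, S⟩ s' → SKRun (n + 1) ⟨.lam x t, e, c :: S⟩ s'
  | betanw {x : ℕ} {t : Term} {e : Env} {c : Clo} {S : List Clo} {s' : State} {n : ℕ} :
      x ∈ t.fv → SKRun n ⟨t, .cons x c e, S⟩ s' → SKRun (n + 1) ⟨.lam x t, e, c :: S⟩ s'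
  | sub {x : ℕ} {e : Env} {u : Term} {e' : Env} {S : List Clo} {s' : State} {n : ℕ} :
      Env.lookup e x = some (.mk u e') → SKRun n ⟨u, e', S⟩ s' → SKRun n ⟨.var x, e, S⟩ s'

/-! Concrete combinators. -/

/-- I := λx.x -/
def tmI : Term := .lam 0 (.var 0)
/-- θ := λx.λy.y (x x y)  (variables: x := 0, y := 1) -/
def tmTheta : Term := .lam 0 (.lam 1 (.app (.var 1) (.app (.app (.var 0) (.var 0)) (.var 1))))
/-- fix := θ θ -/
def tmFix : Term := .app tmTheta tmTheta
/-- x x y -/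
def xxy : Term := .app (.app (.var 0) (.var 0)) (.var 1)
/-- toyaux := λf.λz. z f f I  (f := 3, z := 2) -/
def tmToyaux : Term := .lam 3 (.lam 2 (.app (.app (.app (.var 2) (.var 3)) (.var 3)) tmI))
/-- toy := fix toyaux -/
def tmToy : Term := .app tmFix tmToyaux

/-- Scott encoding of binary strings (false = 0, true = 1; x0 := 4, x1 := 5, xε := 6):
`⟨ε⟩ := λx0.λx1.λxε.xε`, `⟨b·r⟩ := λx0.λx1.λxε.xb ⟨r⟩`. -/
def encStr : List Bool → Term
  | [] => .lam 4 (.lam 5 (.lam 6 (.var 6)))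
  | b :: r => .lam 4 (.lam 5 (.lam 6 (.app (.var (if b then 5 else 4)) (encStr r))))

/-- A variable fresh for `t`. -/
def freshVar (t : Term) : ℕ := t.fv.sup id + 1

/-- η-expansion: `η(t) := λx. t x` with `x ∉ fv t`. -/
def Term.eta (t : Term) : Term := .lam (freshVar t) (.app t (.var (freshVar t)))

/-- n-fold η-expansion. -/
def etaN (n : ℕ) (t : Term) : Term := Term.eta^[n] t

/-! Environment families for the Naive KAM scrolling invariant
(variables: x := 0, y := 1, z := 2, f := 3, x0 := 4, x1 := 5, xε := 6). -/

/-- `e0 := [x←(θ,ε)]·[y←(toyaux,ε)]`, `e(i+1) := [x←(x,ei)]·[y←(y,ei)]`. -/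
def eE : ℕ → Env
  | 0 => .cons 0 (.mk tmTheta .nil) (.cons 1 (.mk tmToyaux .nil) .nil)
  | i + 1 => .cons 0 (.mk (.var 0) (eE i)) (.cons 1 (.mk (.var 1) (eE i)) .nil)

/-- `e″0 := ε`, `e″(i+1) := [xε←(I,e′i)]·[x1←(f,e′i)]·[x0←(f,e′i)]·e″i`
(with `e′i` inlined). -/
def eDD (s : List Bool) : ℕ → Env
  | 0 => .nil
  | i + 1 =>
    let ep : Env := .cons 2 (.mk (encStr (s.drop i)) (eDD s i)) (.cons 3 (.mk xxy (eE i)) .nil)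
    .cons 6 (.mk tmI ep) (.cons 5 (.mk (.var 3) ep) (.cons 4 (.mk (.var 3) ep) (eDD s i)))

/-- `e′i := [z←(⟨b(i+1)⋯bn⟩, e″i)]·[f←(x x y, ei)]`. -/
def eP (s : List Bool) (i : ℕ) : Env :=
  .cons 2 (.mk (encStr (s.drop i)) (eDD s i)) (.cons 3 (.mk xxy (eE i)) .nil)

/-! The family `tn` for the abstract-time overhead explosion
(variables `xi := i`). -/

/-- `x0 x1 ⋯ xn`. -/
def varsApp : ℕ → Term
  | 0 => .var 0
  | n + 1 => .app (varsApp n) (.var (n + 1))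

/-- Term component of `Sn`: `x0 x0` for `n = 0`, `x0 ⋯ xn` for `n ≥ 1`. -/
def sTerm : ℕ → Term
  | 0 => .app (.var 0) (.var 0)
  | n + 1 => varsApp (n + 1)

/-- `e0 := [x0←(I,ε)]`, `e(n+1) := [x(n+1)←Sn]·en`. -/
def eN : ℕ → Env
  | 0 => .cons 0 (.mk tmI .nil) .nil
  | n + 1 => .cons (n + 1) (.mk (sTerm n) (eN n)) (eN n)

/-- `Sn := (sTerm n, en)`. -/
def sClo (n : ℕ) : Clo := .mk (sTerm n) (eN n)

/-- `Ci⟨t⟩ := λxi. t (x0 ⋯ xi)` (with `C0⟨t⟩ = λx0. t (x0 x0)`). -/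
def cPlug (i : ℕ) (t : Term) : Term := .lam i (.app t (sTerm i))

/-- `C0⟨C1⟨⋯Cn⟨t⟩⋯⟩⟩`. -/
def nest (n : ℕ) (t : Term) : Term := (List.range (n + 1)).foldr cPlug t

/-- `tn := C0⟨C1⟨⋯Cn⟨λy.I⟩⋯⟩⟩ I`. -/
def tN (n : ℕ) : Term := .app (nest n (.lam 1 tmI)) tmI

/-! Global-copy scrolling terms (s′ := 7, z := 2, x := 0, f := 3). -/

/-- `λf.λs′. s′ f f z` (free variable z). -/
def tScroll : Term :=
  .lam 3 (.lam 7 (.app (.app (.app (.var 7) (.var 3)) (.var 3)) (.var 2)))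

/-- `glCpy := λx.( fix (λf.λs′. s′ f f x) ) x`. -/
def glCpy : Term :=
  .lam 0 (.app (.app tmFix
    (.lam 3 (.lam 7 (.app (.app (.app (.var 7) (.var 3)) (.var 3)) (.var 0)))))
    (.var 0))

/-! The Space LAM. -/

structure LState where
  dump : List (Clo × List Clo)
  tm : Term
  env : Env
  stk : List Clo

inductive LAM : LState → LState → Prop
  | sea {D : List (Clo × List Clo)} {t u : Term} {e : Env} {S : List Clo} :
      LAM ⟨D, .app t u, e, S⟩ ⟨(.mk t (e.restrict t.fv), S) :: D, u, e.restrict u.fv, []⟩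
  | ret {D : List (Clo × List Clo)} {u : Term} {e' : Env} {S : List Clo}
      {x : ℕ} {t : Term} {e : Env} :
      LAM ⟨(.mk u e', S) :: D, .lam x t, e, []⟩ ⟨D, u, e', .mk (.lam x t) e :: S⟩
  | betaw {D : List (Clo × List Clo)} {x : ℕ} {t : Term} {e : Env} {c : Clo} {S : List Clo} :
      x ∉ t.fv → LAM ⟨D, .lam x t, e, c :: S⟩ ⟨D, t, e, S⟩
  | betanw {D : List (Clo × List Clo)} {x : ℕ} {t : Term} {e : Env} {c : Clo} {S : List Clo} :
      x ∈ t.fv → LAM ⟨D, .lam x t, e, c :: S⟩ ⟨D, t, .cons x c e, S⟩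
  | sub {D : List (Clo × List Clo)} {x : ℕ} {e : Env} {u : Term} {e' : Env} {S : List Clo} :
      Env.lookup e x = some (.mk u e') → LAM ⟨D, .var x, e, S⟩ ⟨D, u, e', S⟩

def LFinal (ls : LState) : Prop := ∀ ls', ¬ LAM ls ls'

/-- The Space KAM state `(t,e,S)` seen as the Space LAM state `(ε,t,e,S)`. -/
def embed (s : State) : LState := ⟨[], s.tm, s.env, s.stk⟩

def lInit (t : Term) : LState := ⟨[], t, .nil, []⟩

def LState.size (t0 : Term) (ls : LState) : ℕ :=
  (ls.dump.map (fun p => Clo.size t0 p.1 + stackSize t0 p.2)).sum +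
    addrSize t0 ls.tm + Env.sizeE t0 ls.env + stackSize t0 ls.stk

/-- A LAM-sequence from `a` whose first state with empty dump after `a` is its target. -/
inductive LRunToEmpty : LState → LState → Prop
  | single {a b : LState} : LAM a b → b.dump = [] → LRunToEmpty a b
  | cons {a b c : LState} : LAM a b → b.dump ≠ [] → LRunToEmpty b c → LRunToEmpty a c

/-! Log-sensitive Turing machines. -/

/-- Input-tape alphabet {0, 1, L, R}. -/
inductive ISym : Type | zero | one | lend | rend
deriving DecidableEq

/-- Work-tape alphabet {0, 1, □}. -/
inductive WSym : Type | zero | one | blank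
deriving DecidableEq

/-- Head moves. -/
inductive Move : Type | L | R | N
deriving DecidableEq

/-- A log-sensitive Turing machine: states `Fin n`, initial state, final states
`qtrue = s1` and `qfalse = s0`, and a deterministic transition function reading the
current state and the two scanned symbols, writing on the work tape, moving both
heads, and changing state (`none` = halt). -/
structure TM where
  n : ℕ
  start : Fin n
  qtrue : Fin n
  qfalse : Fin n
  δ : Fin n → ISym → WSym → Option (Fin n × WSym × Move × Move)

/-- A configuration: state, input-head position (on the tape `L i R`), and the
work tape split as (left part, reversed) / scanned symbol / (right part). -/
structure Config (M : TM) where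
  q : Fin M.n
  ipos : ℕ
  wl : List WSym
  wcur : WSym
  wr : List WSym

/-- The symbol of the input tape `L i R` at a given position. -/
def inputAt (i : List Bool) (p : ℕ) : ISym :=
  if p = 0 then .lend
  else if h : p - 1 < i.length then (if i.get ⟨p - 1, h⟩ then .one else .zero)
  else .rend

def moveIpos (p : ℕ) : Move → ℕ
  | .L => p - 1
  | .R => p + 1
  | .N => p

def moveWork (wl : List WSym) (c : WSym) (wr : List WSym) : Move → List WSym × WSym × List WSym
  | .L => match wl with
    | [] => ([], .blank, c :: wr)
    | a :: l => (l, a, c :: wr)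
  | .R => match wr with
    | [] => (c :: wl, .blank, [])
    | a :: r => (c :: wl, a, r)
  | .N => (wl, c, wr)

/-- One transition of the TM `M` on input `i`. -/
def TMStep (M : TM) (i : List Bool) (c c' : Config M) : Prop :=
  ∃ q' w mi mw, M.δ c.q (inputAt i c.ipos) c.wcur = some (q', w, mi, mw) ∧
    c'.q = q' ∧ c'.ipos = moveIpos c.ipos mi ∧
    (c'.wl, c'.wcur, c'.wr) = moveWork c.wl w c.wr mw

def initConfig (M : TM) : Config M := ⟨M.start, 0, [], .blank, []⟩

/-- Number of work-tape cells used by a configuration. -/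
def Config.workSize {M : TM} (c : Config M) : ℕ := c.wl.length + 1 + c.wr.length

def TMFinal (M : TM) (i : List Bool) (c : Config M) : Prop := ∀ c', ¬ TMStep M i c c'

/-- `⟨1⟩ := λx.λy.x` and `⟨0⟩ := λx.λy.y`. -/
def encBool (b : Bool) : Term :=
  if b then .lam 0 (.lam 1 (.var 0)) else .lam 0 (.lam 1 (.var 1))

/-! The run of `toy ⟨s⟩` is the scrolling loop `θ θ toyaux ⟨r⟩ → ⟨r⟩ f f I → θ θ toyaux ⟨r'⟩`,
which consumes one bit of `r = b·r'` per iteration; because the Space KAM garbage-collects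
environments, every state of the run holds at most nine closures, whatever the input.
Since the Space KAM is deterministic, these are all the reachable states, and each closure
costs at most two addresses of bit-length `log |toy ⟨s⟩| = O(log |s|)`. Conversely, the loop
eventually pushes the closure of the last suffix of `⟨s⟩`, whose address is about `5 |s|`. -/

open Relation

theorem Relator.RightUnique.of_reflTransGen_of_path_to_normal {α : Type*} {R : α → α → Prop}
    {P : α → Prop} (hR : Relator.RightUnique R) {a b c : α} (hc : ∀ d, ¬ R c d)
    (hpath : ReflTransGen (fun x y => R x y ∧ P y) a c) (ha : P a) (hab : ReflTransGen R a b) :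
    P b := by
  induction hab using ReflTransGen.head_induction_on generalizing c with
  | refl => exact ha
  | head hstep _ ih =>
    rcases hpath.cases_head with rfl | ⟨a', ⟨hstep', ha'⟩, hpath'⟩
    · exact absurd hstep (hc _)
    · obtain rfl := hR hstep hstep'
      exact ih hc hpath' ha'

theorem NSteps.exists_of_reflTransGen {α : Type*} {R : α → α → Prop} {a b : α}
    (h : ReflTransGen R a b) : ∃ n, NSteps R n a b := by
  induction h using ReflTransGen.head_induction_on with
  | refl => exact ⟨0, .refl _⟩
  | head hstep _ ih =>
    obtain ⟨n, h⟩ := ih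
    exact ⟨n + 1, .head hstep h⟩

theorem SK.rightUnique : Relator.RightUnique SK := by
  intro a b c h1 h2
  cases h1 <;> cases h2 <;> simp_all

theorem SKFinal.lam_nil (x : ℕ) (t : Term) (e : Env) : SKFinal ⟨.lam x t, e, []⟩ := by
  rintro _ ⟨⟩

theorem Env.restrict_empty : (e : Env) → e.restrict ∅ = .nil
  | .nil => rfl
  | .cons _ _ e => by simp [Env.restrict, Env.restrict_empty e]

theorem SK.seanv_closed {t u : Term} {e : Env} (S : List Clo) (hu : ∀ x, u ≠ .var x)
    (hclosed : u.fv = ∅) : SK ⟨.app t u, e, S⟩ ⟨t, e.restrict t.fv, .mk u .nil :: S⟩ := by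
  simpa [hclosed, Env.restrict_empty] using SK.seanv (t := t) (e := e) S hu

section Size

variable (t0 : Term)

def addrBound : ℕ := Nat.size t0.inorder.length

theorem addrSize_le_addrBound (u : Term) : addrSize t0 u ≤ addrBound t0 :=
  Nat.size_le_size List.idxOf_le_length

mutual
theorem Clo.size_add_addrBound_le :
    (c : Clo) → c.size t0 + addrBound t0 ≤ 2 * c.count * addrBound t0
  | .mk u e => by
    have hu := addrSize_le_addrBound t0 u
    have he := Env.sizeE_le e
    simp only [Clo.size, Clo.count]
    nlinarith
theorem Env.sizeE_le : (e : Env) → e.sizeE t0 ≤ 2 * e.count * addrBound t0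
  | .nil => by simp [Env.sizeE]
  | .cons x c e => by
    have hx := addrSize_le_addrBound t0 (.var x)
    have hc := Clo.size_add_addrBound_le c
    have he := Env.sizeE_le e
    simp only [Env.sizeE, Env.count]
    nlinarith
end

theorem stackSize_le (S : List Clo) :
    stackSize t0 S ≤ 2 * (S.map Clo.count).sum * addrBound t0 := by
  induction S with
  | nil => simp [stackSize]
  | cons c S ih =>
    have hc := Clo.size_add_addrBound_le t0 c
    simp only [stackSize, List.map_cons, List.sum_cons] at ih ⊢
    nlinarith

theorem State.size_le_count (st : State) : st.size t0 ≤ 2 * st.count * addrBound t0 := by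
  have ht := addrSize_le_addrBound t0 st.tm
  have he := Env.sizeE_le t0 st.env
  have hS := stackSize_le t0 st.stk
  simp only [State.size, State.count]
  nlinarith

end Size

theorem fv_encStr (r : List Bool) : (encStr r).fv = ∅ := by
  induction r with
  | nil => decide
  | cons b r ih => cases b <;> simp only [encStr, Term.fv, ih, Finset.union_empty] <;> decide

theorem encStr_ne_var (r : List Bool) (x : ℕ) : encStr r ≠ .var x := by
  cases r <;> simp [encStr]

theorem encStr_eq_lam (r : List Bool) : ∃ t, encStr r = .lam 4 t := by
  cases r <;> exact ⟨_, rfl⟩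

theorem inorder_encStr_cons (b : Bool) (q : List Bool) :
    (encStr (b :: q)).inorder =
      [encStr (b :: q), .lam 5 (.lam 6 (.app (.var (if b then 5 else 4)) (encStr q))),
        .lam 6 (.app (.var (if b then 5 else 4)) (encStr q)), .var (if b then 5 else 4),
        .app (.var (if b then 5 else 4)) (encStr q)] ++ (encStr q).inorder := by
  cases b <;> rfl

theorem length_inorder_encStr (r : List Bool) :
    (encStr r).inorder.length = 5 * r.length + 4 := by
  induction r with
  | nil => rfl
  | cons b r ih =>
    simp only [inorder_encStr_cons, List.length_append, List.length_cons, List.length_nil, ih]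
    omega

theorem idxOf_encStr_append (p r : List Bool) :
    (encStr (p ++ r)).inorder.idxOf (encStr r) = 5 * p.length := by
  obtain ⟨t, ht⟩ := encStr_eq_lam r
  induction p with
  | nil => simp [ht, Term.inorder]
  | cons b p ih =>
    have hne : encStr (b :: (p ++ r)) ≠ encStr r := fun h => by
      have := congrArg (fun t => t.inorder.length) h
      simp only [length_inorder_encStr, List.length_cons, List.length_append] at this
      omega
    rw [List.cons_append, inorder_encStr_cons, List.idxOf_append_of_notMem, ih]
    · simp only [List.length_cons, List.length_nil]
      omega
    · rw [ht] at hne ⊢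
      simp [hne.symm]

theorem length_inorder_tmToy : tmToy.inorder.length = 30 := by decide

theorem addrBound_toy_le (s : List Bool) :
    addrBound (.app tmToy (encStr s)) ≤ Nat.log 2 s.length + 7 := by
  have hlen : (Term.app tmToy (encStr s)).inorder.length = 5 * s.length + 35 := by
    simp only [Term.inorder, List.length_append, List.length_cons, length_inorder_tmToy,
      length_inorder_encStr]
    omega
  rw [addrBound, hlen, Nat.size_le]
  have hlt := Nat.lt_pow_succ_log_self one_lt_two s.length
  have hpos : 2 ≤ 2 ^ (Nat.log 2 s.length + 1) := Nat.le_self_pow (by omega) 2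
  have hpow : 2 ^ (Nat.log 2 s.length + 7) = 64 * 2 ^ (Nat.log 2 s.length + 1) := by ring
  omega

theorem addrSize_toy_encStr_append (p r : List Bool) :
    addrSize (.app tmToy (encStr (p ++ r))) (encStr r) = Nat.size (31 + 5 * p.length) := by
  obtain ⟨t, ht⟩ := encStr_eq_lam r
  have hnotMem : encStr r ∉ tmToy.inorder := by
    simp [ht, tmToy, tmFix, tmTheta, tmToyaux, tmI, Term.inorder]
  rw [addrSize, Term.inorder, List.idxOf_append_of_notMem hnotMem,
    List.idxOf_cons_ne _ (by simp [ht]), idxOf_encStr_append, length_inorder_tmToy]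
  congr 1
  omega

def cTheta : Clo := .mk tmTheta .nil
def cToyaux : Clo := .mk tmToyaux .nil
/-- The closure bound to `f`; it decodes to `fix toyaux`. -/
def cF : Clo := .mk xxy (.cons 1 cToyaux (.cons 0 cTheta .nil))
def cI : Clo := .mk tmI .nil

/-- The head of each iteration of the loop, `θ θ toyaux ⟨r⟩`. -/
def loopState (r : List Bool) : State := ⟨tmTheta, .nil, [cTheta, cToyaux, .mk (encStr r) .nil]⟩

abbrev SKWithin (k : ℕ) : State → State → Prop := ReflTransGen (fun a b => SK a b ∧ b.count ≤ k)

theorem SKWithin.head {k : ℕ} {a b c : State} (h : SK a b) (hbc : SKWithin k b c)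
    -- `decide` refuses goals with free variables, evaluation by `rfl` does not mind them
    (hb : b.count ≤ k := by exact Nat.le_of_ble_eq_true rfl) : SKWithin k a c :=
  ReflTransGen.head ⟨h, hb⟩ hbc

theorem SKWithin.reflTransGen {k : ℕ} {a b : State} (h : SKWithin k a b) :
    ReflTransGen SK a b :=
  ReflTransGen.mono (fun _ _ h => h.1) _ _ h

theorem SKWithin.toy_app (v : Term) (hv : ∀ x, v ≠ .var x) :
    SKWithin 9 ⟨.app tmToy v, .nil, []⟩ ⟨tmTheta, .nil, [cTheta, cToyaux, .mk v .nil]⟩ := by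
  refine .head (.seanv _ hv) ?_
  refine .head (.seanv _ (by simp [tmToyaux])) ?_
  refine .head (.seanv _ (by simp [tmTheta])) ?_
  exact .refl

theorem SKWithin.fix_toyaux (u : Term) :
    SKWithin 9 ⟨tmTheta, .nil, [cTheta, cToyaux, .mk u .nil]⟩ ⟨u, .nil, [cF, cF, cI]⟩ := by
  refine .head (.betanw _ _ (by decide)) ?_
  refine .head (.betanw _ _ (by decide)) ?_
  refine .head (.seanv _ (by simp)) ?_
  refine .head (.sub _ rfl) ?_
  refine .head (.betanw _ _ (by decide)) ?_
  refine .head (.betanw _ _ (by decide)) ?_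
  refine .head (.seanv _ (by simp [tmI])) ?_
  refine .head (.seav _ rfl) ?_
  refine .head (.seav _ rfl) ?_
  refine .head (.sub _ rfl) ?_
  exact .refl

theorem SKWithin.cF_apply (u : Term) :
    SKWithin 9 ⟨xxy, .cons 1 cToyaux (.cons 0 cTheta .nil), [.mk u .nil]⟩
      ⟨tmTheta, .nil, [cTheta, cToyaux, .mk u .nil]⟩ := by
  refine .head (.seav _ rfl) ?_
  refine .head (.seav _ rfl) ?_
  refine .head (.sub _ rfl) ?_
  exact .refl

theorem SKWithin.encStr_cons (b : Bool) (r : List Bool) :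
    SKWithin 9 ⟨encStr (b :: r), .nil, [cF, cF, cI]⟩ (loopState r) := by
  have hfv : ∀ x, x ∉ (encStr r).fv := by simp [fv_encStr]
  cases b
  · refine .head (.betanw _ _ (by simp [Term.fv])) ?_
    refine .head (.betaw _ _ (by simp [Term.fv, hfv])) ?_
    refine .head (.betaw _ _ (by simp [Term.fv, hfv])) ?_
    refine .head (.seanv_closed _ (encStr_ne_var r) (fv_encStr r)) ?_
    refine .head (.sub _ rfl) ?_
    exact SKWithin.cF_apply _
  · refine .head (.betaw _ _ (by simp [Term.fv, hfv])) ?_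
    refine .head (.betanw _ _ (by simp [Term.fv])) ?_
    refine .head (.betaw _ _ (by simp [Term.fv, hfv])) ?_
    refine .head (.seanv_closed _ (encStr_ne_var r) (fv_encStr r)) ?_
    refine .head (.sub _ rfl) ?_
    exact SKWithin.cF_apply _

theorem SKWithin.encStr_nil : SKWithin 9 ⟨encStr [], .nil, [cF, cF, cI]⟩ ⟨tmI, .nil, []⟩ := by
  refine .head (.betaw _ _ (by decide)) ?_
  refine .head (.betaw _ _ (by decide)) ?_
  refine .head (.betanw _ _ (by decide)) ?_
  refine .head (.sub _ rfl) ?_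
  exact .refl

theorem SKWithin.loopState_append (p r : List Bool) :
    SKWithin 9 (loopState (p ++ r)) (loopState r) := by
  induction p with
  | nil => exact .refl
  | cons b p ih =>
    exact ((SKWithin.fix_toyaux _).trans (SKWithin.encStr_cons b (p ++ r))).trans ih

theorem SKWithin.toy_loopState (p r : List Bool) :
    SKWithin 9 (initState (.app tmToy (encStr (p ++ r)))) (loopState r) :=
  (SKWithin.toy_app _ (encStr_ne_var _)).trans (SKWithin.loopState_append p r)

theorem SKWithin.toy_encStr (s : List Bool) :
    SKWithin 9 (initState (.app tmToy (encStr s))) ⟨tmI, .nil, []⟩ := by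
  have hloop := SKWithin.toy_loopState s []
  rw [List.append_nil] at hloop
  exact (hloop.trans (SKWithin.fix_toyaux _)).trans SKWithin.encStr_nil

theorem addrSize_encStr_le_size_loopState (t0 : Term) (r : List Bool) :
    addrSize t0 (encStr r) ≤ (loopState r).size t0 := by
  simp only [loopState, State.size, stackSize, List.map_cons, List.map_nil, List.sum_cons,
    Clo.size, Env.sizeE]
  omega

theorem count_le_of_reachable_toy {s : List Bool} {st : State}
    (h : ReflTransGen SK (initState (.app tmToy (encStr s))) st) : st.count ≤ 9 :=
  SK.rightUnique.of_reflTransGen_of_path_to_normal (SKFinal.lam_nil 0 _ _)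
    (SKWithin.toy_encStr s) (Nat.le_of_ble_eq_true rfl) h

theorem size_le_of_reachable_toy {s : List Bool} {st : State}
    (h : ReflTransGen SK (initState (.app tmToy (encStr s))) st) :
    st.size (.app tmToy (encStr s)) ≤ 126 * (Nat.log 2 s.length + 1) :=
  calc st.size (.app tmToy (encStr s))
      ≤ 2 * st.count * addrBound (.app tmToy (encStr s)) := State.size_le_count _ st
    _ ≤ 2 * 9 * (Nat.log 2 s.length + 7) :=
      Nat.mul_le_mul (Nat.mul_le_mul_left 2 (count_le_of_reachable_toy h)) (addrBound_toy_le s)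
    _ ≤ 126 * (Nat.log 2 s.length + 1) := by omega

theorem log_length_le_size_loopState (p : List Bool) {r : List Bool} (hr : r.length = 1) :
    Nat.log 2 (p ++ r).length ≤ (loopState r).size (.app tmToy (encStr (p ++ r))) := by
  have hpow : 2 ^ Nat.log 2 (p ++ r).length ≤ 31 + 5 * p.length := by
    have := Nat.pow_log_le_self 2 (x := (p ++ r).length) (by simp [hr])
    simp only [List.length_append, hr] at this ⊢
    omega
  have hsize := addrSize_encStr_le_size_loopState (.app tmToy (encStr (p ++ r))) r
  rw [addrSize_toy_encStr_append] at hsize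
  exact (Nat.lt_size.2 hpow).le.trans hsize

/-- the Space KAM evaluates `toy ⟨s⟩` completely to `(I, ε, ε)`
in space `Θ(log |s|)` (sizes relative to the initial code `toy ⟨s⟩`). -/
theorem space_kam_toy_log_space :
    (∀ s : List Bool, ∃ m : ℕ,
      NSteps SK m (initState (.app tmToy (encStr s))) ⟨tmI, .nil, []⟩ ∧
      SKFinal ⟨tmI, .nil, []⟩) ∧
    (∃ k2 : ℕ, 0 < k2 ∧ ∀ (s : List Bool) (st : State),
      Relation.ReflTransGen SK (initState (.app tmToy (encStr s))) st →
      st.size (.app tmToy (encStr s)) ≤ k2 * (Nat.log 2 s.length + 1)) ∧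
    (∃ k1 : ℕ, 0 < k1 ∧ ∀ s : List Bool, 2 ≤ s.length → ∃ st : State,
      Relation.ReflTransGen SK (initState (.app tmToy (encStr s))) st ∧
      Nat.log 2 s.length ≤ k1 * st.size (.app tmToy (encStr s))) := by
  refine ⟨fun s => ?_, ⟨126, by norm_num, fun s _ => size_le_of_reachable_toy⟩,
    ⟨1, one_pos, fun s hs => ?_⟩⟩
  · obtain ⟨m, hm⟩ := NSteps.exists_of_reflTransGen (SKWithin.toy_encStr s).reflTransGen
    exact ⟨m, hm, SKFinal.lam_nil 0 _ _⟩
  · obtain ⟨p, r, rfl, hr⟩ : ∃ p r, s = p ++ r ∧ r.length = 1 :=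
      ⟨s.take (s.length - 1), s.drop (s.length - 1), (s.take_append_drop _).symm,
        by rw [List.length_drop]; omega⟩
    refine ⟨loopState r, (SKWithin.toy_loopState p r).reflTransGen, ?_⟩
    rw [one_mul]
    exact log_length_le_size_loopState p hr
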